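/- arXiv:0709.0919 — 3 statements merged into one kernel-verified Lean document; each statement's English description precedes it below -/
import Mathlib

section
/- Let (E, B, π, [·,·], D) be a pre-Courant algebroid with [Df, y] = 0 for all f ∈ C∞(M) and y ∈ Γ(E), and with the Leibniz rules [x, fy] = f[x,y] + (π(x)·f)y and [fx,y] = f[x,y] − (π(y)·f)x + B(x,y)Df. Define the Jacobiator J(x,y,z) = [x,[y,z]] − [[x,y],z] − [y,[x,z]]. Then J(fx, y, z) = f·J(x,y,z) for all f ∈ C∞(M), i.e. J is C∞(M)-linear in its first argument. -/
/-- An algebraic model of a pre-Courant algebroid: `R` plays the role of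
`C∞(M)`, `E` the role of the space of sections `Γ(E)`, `B` the fiber metric,
`anchor x f` the derivative `π(x)·f`, `bracket` the (non-skew) bracket and
`Dop` the operator `D` with `B(Df, x) = π(x)·f`, satisfying the axioms
`π(x)·B(y,z) = B([x,y],z) + B(y,[x,z])` and `[x,x] = ½ D(B(x,x))`. -/
structure PreCourant (R : Type*) [CommRing R] [Invertible (2 : R)]
    (E : Type*) [AddCommGroup E] [Module R E] where
  B : E →ₗ[R] E →ₗ[R] R
  B_symm : ∀ x y, B x y = B y x
  B_nondeg : ∀ x, (∀ y, B x y = 0) → x = 0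
  anchor : E → R → R
  anchor_deriv : ∀ x f g, anchor x (f * g) = f * anchor x g + g * anchor x f
  bracket : E → E → E
  bracket_add_left : ∀ x y z, bracket (x + y) z = bracket x z + bracket y z
  bracket_add_right : ∀ x y z, bracket x (y + z) = bracket x y + bracket x z
  Dop : R → E
  Dop_add : ∀ f g, Dop (f + g) = Dop f + Dop g
  Dop_def : ∀ f x, B (Dop f) x = anchor x f
  invariance : ∀ x y z, anchor x (B y z) = B (bracket x y) z + B y (bracket x z)
  sq : ∀ x, bracket x x = (⅟(2 : R)) • Dop (B x x)

/-- The Jacobiator of the bracket. -/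
def PreCourant.Jac {R : Type*} [CommRing R] [Invertible (2 : R)]
    {E : Type*} [AddCommGroup E] [Module R E] (P : PreCourant R E)
    (x y z : E) : E :=
  P.bracket x (P.bracket y z) - P.bracket (P.bracket x y) z
    - P.bracket y (P.bracket x z)

/-! Expanding `J(f x, y, z) - f J(x, y, z)` with the Leibniz rules leaves three groups of
terms. The coefficient of `x` is `π([y,z])f - [π(y), π(z)]f`, which vanishes because invariance
applied to `Df` (using `[Df, ·] = 0`) makes the anchor a Lie morphism on functions. The
`π(z)f`-multiple of `[x,y] + [y,x] - D(B(x,y))` vanishes by polarizing `[x,x] = ½ D(B(x,x))`.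
The coefficient of `Df` is `B(x,[y,z]) - B([x,y],z) + π(z)B(x,y) - π(y)B(x,z)`, which is
invariance combined with that polarization. -/

namespace PreCourant

variable {R : Type*} [CommRing R] [Invertible (2 : R)]
    {E : Type*} [AddCommGroup E] [Module R E] (P : PreCourant R E)

lemma bracket_sub_left (x y z : E) :
    P.bracket (x - y) z = P.bracket x z - P.bracket y z :=
  map_sub (AddMonoidHom.mk' (P.bracket · z) fun x y => P.bracket_add_left x y z) x y

lemma bracket_sub_right (x y z : E) :
    P.bracket x (y - z) = P.bracket x y - P.bracket x z :=
  map_sub (AddMonoidHom.mk' (P.bracket x) (P.bracket_add_right x)) y z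

lemma bracket_add_bracket_swap (x y : E) :
    P.bracket x y + P.bracket y x = P.Dop (P.B x y) := by
  have h := P.sq (x + y)
  have hB : P.B (x + y) (x + y) = P.B x x + P.B y y + 2 * P.B x y := by
    simp only [map_add, LinearMap.add_apply, P.B_symm y x]
    ring
  have hD : P.Dop (2 * P.B x y) = (2 : R) • P.Dop (P.B x y) := by
    rw [two_mul, P.Dop_add, two_smul]
  rw [P.bracket_add_left, P.bracket_add_right, P.bracket_add_right, P.sq x, P.sq y,
    hB, P.Dop_add, P.Dop_add, hD, smul_add, smul_add, smul_smul, invOf_mul_self,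
    one_smul] at h
  linear_combination (norm := module) h

lemma bracket_swap (x y : E) : P.bracket y x = P.Dop (P.B x y) - P.bracket x y := by
  rw [← P.bracket_add_bracket_swap]
  abel

lemma bracket_Dop_right (hDf : ∀ (f : R) (y : E), P.bracket (P.Dop f) y = 0)
    (y : E) (f : R) : P.bracket y (P.Dop f) = P.Dop (P.anchor y f) := by
  rw [P.bracket_swap, hDf, sub_zero, P.Dop_def]

lemma anchor_bracket (hDf : ∀ (f : R) (y : E), P.bracket (P.Dop f) y = 0)
    (y z : E) (f : R) :
    P.anchor (P.bracket y z) f = P.anchor y (P.anchor z f) - P.anchor z (P.anchor y f) := by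
  have h := P.invariance y (P.Dop f) z
  rw [P.Dop_def, P.bracket_Dop_right hDf, P.Dop_def, P.Dop_def] at h
  rw [h]
  ring

lemma B_bracket_left (x y z : E) :
    P.B (P.bracket x y) z
      = P.B x (P.bracket y z) + P.anchor z (P.B x y) - P.anchor y (P.B x z) := by
  rw [P.invariance y x z, P.bracket_swap x y, map_sub, LinearMap.sub_apply, P.Dop_def]
  ring

lemma bracket_smul_left_bracket (hDf : ∀ (f : R) (y : E), P.bracket (P.Dop f) y = 0)
    (hLeibL : ∀ (x y : E) (f : R),
      P.bracket (f • x) y = f • P.bracket x y - (P.anchor y f) • x + (P.B x y) • P.Dop f)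
    (f : R) (x y z : E) :
    P.bracket (P.bracket (f • x) y) z
      = f • P.bracket (P.bracket x y) z - P.anchor z f • P.bracket x y
        + P.B (P.bracket x y) z • P.Dop f - P.anchor y f • P.bracket x z
        + P.anchor z (P.anchor y f) • x - P.B x z • P.Dop (P.anchor y f)
        - P.anchor z (P.B x y) • P.Dop f + P.anchor z f • P.Dop (P.B x y) := by
  rw [hLeibL x y f, P.bracket_add_left, P.bracket_sub_left, hLeibL, hLeibL, hLeibL, hDf,
    P.Dop_def]
  module

lemma bracket_bracket_smul_left (hDf : ∀ (f : R) (y : E), P.bracket (P.Dop f) y = 0)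
    (hLeibR : ∀ (x y : E) (f : R),
      P.bracket x (f • y) = f • P.bracket x y + (P.anchor x f) • y)
    (hLeibL : ∀ (x y : E) (f : R),
      P.bracket (f • x) y = f • P.bracket x y - (P.anchor y f) • x + (P.B x y) • P.Dop f)
    (f : R) (x y z : E) :
    P.bracket y (P.bracket (f • x) z)
      = f • P.bracket y (P.bracket x z) + P.anchor y f • P.bracket x z
        - P.anchor z f • P.bracket y x - P.anchor y (P.anchor z f) • x
        + P.B x z • P.Dop (P.anchor y f) + P.anchor y (P.B x z) • P.Dop f := by
  rw [hLeibL x z f, P.bracket_add_right, P.bracket_sub_right, hLeibR, hLeibR, hLeibR,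
    P.bracket_Dop_right hDf]
  module

end PreCourant

/-- If `[Df, y] = 0` and both Leibniz rules hold, the Jacobiator is
`C∞(M)`-linear in its first argument. -/
theorem stmt7 {R : Type*} [CommRing R] [Invertible (2 : R)]
    {E : Type*} [AddCommGroup E] [Module R E] (P : PreCourant R E)
    (hDf : ∀ (f : R) (y : E), P.bracket (P.Dop f) y = 0)
    (hLeibR : ∀ (x y : E) (f : R),
      P.bracket x (f • y) = f • P.bracket x y + (P.anchor x f) • y)
    (hLeibL : ∀ (x y : E) (f : R),
      P.bracket (f • x) y
        = f • P.bracket x y - (P.anchor y f) • x + (P.B x y) • P.Dop f) :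
    ∀ (f : R) (x y z : E), P.Jac (f • x) y z = f • P.Jac x y z := by
  intro f x y z
  rw [PreCourant.Jac, PreCourant.Jac, hLeibL x (P.bracket y z) f,
    P.bracket_smul_left_bracket hDf hLeibL, P.bracket_bracket_smul_left hDf hLeibR hLeibL,
    P.bracket_swap x y, P.anchor_bracket hDf, P.B_bracket_left]
  module
end

section
/- Let (E, B, π, [·,·], D) be a pre-Courant algebroid with [Df, y] = 0 for all f ∈ C∞(M), y ∈ Γ(E), satisfying [x,y] + [y,x] = D(B(x,y)), π(x)·B(y,z) = B([x,y],z) + B(y,[x,z]), and D(π(x)·f) = [x, Df] for all x, f. Then the Jacobiator J(x,y,z) = [x,[y,z]] − [[x,y],z] − [y,[x,z]] satisfies J(x,y,z) = −J(x,z,y), i.e. J is antisymmetric in its last two arguments. -/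
namespace PreCourant

variable {R : Type*} [CommRing R] [Invertible (2 : R)] {E : Type*} [AddCommGroup E] [Module R E]
  (P : PreCourant R E)

theorem Jac_add_Jac_swap (x y z : E) :
    P.Jac x y z + P.Jac x z y =
      (P.bracket x (P.bracket y z) + P.bracket x (P.bracket z y))
        - (P.bracket (P.bracket x y) z + P.bracket z (P.bracket x y))
        - (P.bracket y (P.bracket x z) + P.bracket (P.bracket x z) y) := by
  unfold Jac
  abel

theorem bracket_bracket_add_bracket_bracket_swap
    (hSkew : ∀ x y : E, P.bracket x y + P.bracket y x = P.Dop (P.B x y))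
    (hDanch : ∀ (x : E) (f : R), P.Dop (P.anchor x f) = P.bracket x (P.Dop f)) (x y z : E) :
    P.bracket x (P.bracket y z) + P.bracket x (P.bracket z y) =
      P.Dop (P.B (P.bracket x y) z) + P.Dop (P.B y (P.bracket x z)) := by
  rw [← P.bracket_add_right, hSkew, ← hDanch, P.invariance, P.Dop_add]

theorem Jac_add_Jac_swap_eq_zero
    (hSkew : ∀ x y : E, P.bracket x y + P.bracket y x = P.Dop (P.B x y))
    (hDanch : ∀ (x : E) (f : R), P.Dop (P.anchor x f) = P.bracket x (P.Dop f)) (x y z : E) :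
    P.Jac x y z + P.Jac x z y = 0 := by
  rw [Jac_add_Jac_swap, P.bracket_bracket_add_bracket_bracket_swap hSkew hDanch, hSkew, hSkew]
  abel

end PreCourant

theorem stmt8_general {R : Type*} [CommRing R] [Invertible (2 : R)]
    {E : Type*} [AddCommGroup E] [Module R E] (P : PreCourant R E)
    (hSkew : ∀ x y : E, P.bracket x y + P.bracket y x = P.Dop (P.B x y))
    (hDanch : ∀ (x : E) (f : R),
      P.Dop (P.anchor x f) = P.bracket x (P.Dop f)) :
    ∀ x y z : E, P.Jac x y z = - P.Jac x z y := fun x y z =>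
  eq_neg_of_add_eq_zero_left (P.Jac_add_Jac_swap_eq_zero hSkew hDanch x y z)

/-- If `[Df, y] = 0`, `[x,y] + [y,x] = D(B(x,y))` and `D(π(x)·f) = [x, Df]`,
then the Jacobiator is antisymmetric in its last two arguments. -/
theorem stmt8 {R : Type*} [CommRing R] [Invertible (2 : R)]
    {E : Type*} [AddCommGroup E] [Module R E] (P : PreCourant R E)
    (hDf : ∀ (f : R) (y : E), P.bracket (P.Dop f) y = 0)
    (hSkew : ∀ x y : E, P.bracket x y + P.bracket y x = P.Dop (P.B x y))
    (hDanch : ∀ (x : E) (f : R),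
      P.Dop (P.anchor x f) = P.bracket x (P.Dop f)) :
    ∀ x y z : E, P.Jac x y z = - P.Jac x z y :=
  stmt8_general P hSkew hDanch
end

section
/- With the setup of the modified Cartan bracket [x,y] = ∇_x y − ∇_y x − {x,y} − κ(x,y) + B(y,κ(x,−)) − B(x,κ(y,−)) + B(∇x, y) on sections of the adjoint tractor bundle A of a parabolic geometry, one has π(x)·B(y,z) = B([x,y],z) + B(y,[x,z]) for all sections x, y, z of A. -/
/-!
Expand `B([x,y],z)` and `B([x,z],y) = B(y,[x,z])` and add them. The two `∇_x` terms give
`π(x)·B(y,z)` because `∇` preserves `B`, and `{x,·}` drops out by invariance of `B`. Every other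
term cancels against its mirror under `y ↔ z`: `B(∇_y x, z)` against `B(∇x, z)(π y)`,
`B(∇_z x, y)` against `B(∇x, y)(π z)`, `B(κ(x,y), z)` against `B(z, κ(x,-))(π y)`, and
`B(x, κ(y,z))` against `B(x, κ(z,y))` because `κ` is alternating.
-/

section CartanBracket

variable {R E : Type*} [CommRing R] [AddCommGroup E] [Module R E]

def cartanBracket (nabla alg kap kform covB : E → E → E) (x y : E) : E :=
  nabla x y - nabla y x - alg x y - kap x y + kform y x - kform x y + covB x y

variable (B : E →ₗ[R] E →ₗ[R] R) (nabla alg kap kform covB : E → E → E)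

theorem apply_cartanBracket
    (hkform : ∀ x y z, B (kform y x) z = B y (kap x z))
    (hcovB : ∀ x y z, B (covB x y) z = B (nabla z x) y) (x y z : E) :
    B (cartanBracket nabla alg kap kform covB x y) z
      = B (nabla x y) z - B (nabla y x) z - B (alg x y) z - B (kap x y) z
        + B y (kap x z) - B x (kap y z) + B (nabla z x) y := by
  simp only [cartanBracket, map_add, map_sub, LinearMap.add_apply, LinearMap.sub_apply,
    hkform, hcovB]

theorem cartanBracket_invariant (hBsymm : ∀ x y, B x y = B y x) (anchor : E → R → R)
    (halg_inv : ∀ x y z, B (alg x y) z + B y (alg x z) = 0)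
    (hkap_skew : ∀ x y, kap x y = - kap y x)
    (hnabla_B : ∀ x y z, anchor x (B y z) = B (nabla x y) z + B y (nabla x z))
    (hkform : ∀ x y z, B (kform y x) z = B y (kap x z))
    (hcovB : ∀ x y z, B (covB x y) z = B (nabla z x) y) (x y z : E) :
    anchor x (B y z)
      = B (cartanBracket nabla alg kap kform covB x y) z
        + B y (cartanBracket nabla alg kap kform covB x z) := by
  rw [hBsymm y (cartanBracket _ _ _ _ _ x z), apply_cartanBracket B nabla alg kap kform covB
    hkform hcovB, apply_cartanBracket B nabla alg kap kform covB hkform hcovB, hnabla_B,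
    hkap_skew z y, map_neg]
  linear_combination halg_inv x y z - hBsymm (nabla x z) y + hBsymm (alg x z) y
    + hBsymm (kap x y) z + hBsymm (kap x z) y

end CartanBracket

/-- Invariance of the metric for the modified Cartan bracket on the adjoint
tractor bundle: `π(x)·B(y,z) = B([x,y],z) + B(y,[x,z])`.  Here `E` models
sections of the adjoint tractor bundle, `anchor x f = π(x)·f`, `nabla x y =
∇_{π(x)} y` with `∇` preserving `B`, `alg` the algebraic bracket with `B`
invariant, `kap` the alternating curvature, `kform y x` the one-form
`Z ↦ B(y,κ(x,Z))` as a section of `T* ⊂ A` (so `B(kform y x, z) = B(y, κ(x,z))`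
by `B(v,z) = v(π(z))`), and `covB x y` the one-form `Z ↦ B(∇_Z x, y)`. -/
theorem stmt15 {R : Type*} [CommRing R]
    {E : Type*} [AddCommGroup E] [Module R E]
    (B : E →ₗ[R] E →ₗ[R] R)
    (hBsymm : ∀ x y, B x y = B y x)
    (anchor : E → R → R)
    (nabla alg kap kform covB : E → E → E)
    (halg_inv : ∀ x y z, B (alg x y) z + B y (alg x z) = 0)
    (hkap_skew : ∀ x y, kap x y = - kap y x)
    (hnabla_B : ∀ x y z,
      anchor x (B y z) = B (nabla x y) z + B y (nabla x z))
    (hkform : ∀ x y z, B (kform y x) z = B y (kap x z))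
    (hcovB : ∀ x y z, B (covB x y) z = B (nabla z x) y)
    (brk : E → E → E)
    (hbrk : ∀ x y, brk x y
      = nabla x y - nabla y x - alg x y - kap x y
        + kform y x - kform x y + covB x y) :
    ∀ x y z : E, anchor x (B y z) = B (brk x y) z + B y (brk x z) := by
  obtain rfl : brk = cartanBracket nabla alg kap kform covB := funext₂ hbrk
  exact cartanBracket_invariant B nabla alg kap kform covB hBsymm anchor halg_inv hkap_skew
    hnabla_B hkform hcovB
end
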